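/- arXiv:1602.06180 — 4 statements merged into one kernel-verified Lean document; each statement's English description precedes it below -/
import Mathlib

section
/- Let β ∈ ℕⁿ be written as β = ∑_{j=0}^{r} λⱼ α(j) with α(j) ∈ (2ℕ)ⁿ, λⱼ ≥ 0, ∑ⱼ λⱼ = 1, and let f_{α(j)} > 0. If the coefficient f_β satisfies |f_β| ≤ ∏_{j: λⱼ>0} (f_{α(j)}/λⱼ)^{λⱼ}, then the circuit polynomial f(x) = ∑_{j=0}^{r} f_{α(j)} x^{α(j)} + f_β x^β is nonnegative on the positive orthant (0,∞)ⁿ. -/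
/-!
Put `P j = x ^ α(j)` and `z j = (f_{α(j)} / λ j) * P j`. Weighted AM–GM gives
`∏ z j ^ λ j ≤ ∑ λ j * z j ≤ ∑ f_{α(j)} P j`, while `∏ P j ^ λ j = x ^ β` because `β = ∑ λ j α(j)`,
so `∏ z j ^ λ j = Θ * x ^ β ≥ |f_β| * x ^ β`.
-/

open Finset

noncomputable section

variable {ι κ : Type*} [Fintype ι]

def circuitNumber (c w : ι → ℝ) : ℝ :=
  ∏ j ∈ univ.filter (fun j => w j ≠ 0), (c j / w j) ^ w j

theorem prod_div_mul_rpow_eq_circuitNumber_mul {c w y : ι → ℝ} (hw : ∀ j, 0 ≤ w j)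
    (hc : ∀ j, 0 ≤ c j) (hy : ∀ j, 0 ≤ y j) :
    ∏ j, (c j / w j * y j) ^ w j = circuitNumber c w * ∏ j, y j ^ w j := by
  rw [circuitNumber, prod_filter, ← prod_mul_distrib]
  refine prod_congr rfl fun j _ => ?_
  by_cases h : w j = 0
  · simp [h]
  · simp [h, Real.mul_rpow (div_nonneg (hc j) (hw j)) (hy j)]

theorem circuitNumber_mul_prod_rpow_le_sum {c w y : ι → ℝ} (hw : ∀ j, 0 ≤ w j)
    (hw₁ : ∑ j, w j = 1) (hc : ∀ j, 0 ≤ c j) (hy : ∀ j, 0 ≤ y j) :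
    circuitNumber c w * ∏ j, y j ^ w j ≤ ∑ j, c j * y j := by
  rw [← prod_div_mul_rpow_eq_circuitNumber_mul hw hc hy]
  calc ∏ j, (c j / w j * y j) ^ w j ≤ ∑ j, w j * (c j / w j * y j) :=
        Real.geom_mean_le_arith_mean_weighted _ _ _ (fun j _ => hw j) hw₁
          fun j _ => mul_nonneg (div_nonneg (hc j) (hw j)) (hy j)
    _ ≤ ∑ j, c j * y j := by
        refine sum_le_sum fun j _ => ?_
        by_cases h : w j = 0
        · simpa [h] using mul_nonneg (hc j) (hy j)
        · rw [← mul_assoc, mul_div_cancel₀ _ h]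

theorem prod_rpow_prod_pow [Fintype κ] {x : κ → ℝ} (hx : ∀ i, 0 < x i) (α : ι → κ → ℕ)
    (w : ι → ℝ) :
    ∏ j, (∏ i, x i ^ α j i) ^ w j = ∏ i, x i ^ ∑ j, w j * (α j i : ℝ) := by
  have hrow : ∀ j, (∏ i, x i ^ α j i) ^ w j = ∏ i, x i ^ (w j * (α j i : ℝ)) := fun j => by
    rw [← Real.finsetProd_rpow _ _ fun i _ => (pow_pos (hx i) _).le]
    refine prod_congr rfl fun i _ => ?_
    rw [← Real.rpow_natCast, ← Real.rpow_mul (hx i).le, mul_comm]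
  simp_rw [hrow]
  rw [prod_comm]
  exact prod_congr rfl fun i _ => (Real.rpow_sum_of_pos (hx i) _ _).symm

end

theorem stmt_5_general (n r : ℕ) (α : Fin (r + 1) → Fin n → ℕ) (β : Fin n → ℕ)
    (lam : Fin (r + 1) → ℝ) (coef : Fin (r + 1) → ℝ) (fβ : ℝ)
    (hlam : ∀ j, 0 ≤ lam j) (hsum : ∑ j, lam j = 1)
    (hβ : ∀ i, (β i : ℝ) = ∑ j, lam j * (α j i : ℝ))
    (hcoef : ∀ j, 0 < coef j)
    (hfβ : |fβ| ≤ ∏ j ∈ Finset.univ.filter (fun j => lam j ≠ 0),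
        (coef j / lam j) ^ (lam j)) :
    ∀ x : Fin n → ℝ, (∀ i, 0 < x i) →
      0 ≤ (∑ j, coef j * ∏ i, x i ^ (α j i)) + fβ * ∏ i, x i ^ (β i) := by
  intro x hx
  have hxβ : 0 < ∏ i, x i ^ β i := prod_pos fun i _ => pow_pos (hx i) _
  have hmonomial : ∏ j, (∏ i, x i ^ α j i) ^ lam j = ∏ i, x i ^ β i := by
    rw [prod_rpow_prod_pow hx]
    exact prod_congr rfl fun i _ => by rw [← hβ, Real.rpow_natCast]
  have hamgm : |fβ| * ∏ i, x i ^ β i ≤ ∑ j, coef j * ∏ i, x i ^ α j i :=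
    calc |fβ| * ∏ i, x i ^ β i ≤ circuitNumber coef lam * ∏ i, x i ^ β i :=
          mul_le_mul_of_nonneg_right hfβ hxβ.le
      _ ≤ ∑ j, coef j * ∏ i, x i ^ α j i := by
          rw [← hmonomial]
          exact circuitNumber_mul_prod_rpow_le_sum hlam hsum (fun j => (hcoef j).le)
            fun j => (prod_pos fun i _ => pow_pos (hx i) _).le
  have hneg : -(|fβ| * ∏ i, x i ^ β i) ≤ fβ * ∏ i, x i ^ β i := by
    rw [← neg_mul]
    exact mul_le_mul_of_nonneg_right (neg_abs_le fβ) hxβ.le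
  linarith

theorem stmt_5 (n r : ℕ) (α : Fin (r + 1) → Fin n → ℕ) (β : Fin n → ℕ)
    (lam : Fin (r + 1) → ℝ) (coef : Fin (r + 1) → ℝ) (fβ : ℝ)
    (hα : ∀ j i, Even (α j i))
    (hlam : ∀ j, 0 ≤ lam j) (hsum : ∑ j, lam j = 1)
    (hβ : ∀ i, (β i : ℝ) = ∑ j, lam j * (α j i : ℝ))
    (hcoef : ∀ j, 0 < coef j)
    (hfβ : |fβ| ≤ ∏ j ∈ Finset.univ.filter (fun j => lam j ≠ 0),
        (coef j / lam j) ^ (lam j)) :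
    ∀ x : Fin n → ℝ, (∀ i, 0 < x i) →
      0 ≤ (∑ j, coef j * ∏ i, x i ^ (α j i)) + fβ * ∏ i, x i ^ (β i) :=
  stmt_5_general n r α β lam coef fβ hlam hsum hβ hcoef hfβ
end

section
/- Let f(x) = ∑_{j=0}^{r} f_{α(j)} x^{α(j)} + f_β x^β be a circuit polynomial with all vertices α(j) even lattice points and all f_{α(j)} > 0, and suppose β is an even lattice point. If f_β ≥ −Θ_f(β), where Θ_f(β) = ∏_{j ∈ nz(β)} (f_{α(j)}/λⱼ)^{λⱼ}, then f is nonnegative on ℝⁿ. -/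
/-!
Since all exponents are even, `f(x) = f(|x₁|, …, |xₙ|)`, so it suffices to treat `y ∈ ℝⁿ` with `y ≥ 0`.
There `y^β = ∏ⱼ (y^{α(j)})^{λⱼ}` because `β = ∑ⱼ λⱼ α(j)`, and the weighted AM-GM inequality
applied to the numbers `(f_{α(j)} / λⱼ) y^{α(j)}` with weights `λⱼ` gives
`Θ_f(β) y^β ≤ ∑ⱼ f_{α(j)} y^{α(j)}`.
-/

open Finset

lemma prod_pow_eq_prod_abs_pow_of_even {κ : Type*} (t : Finset κ) (x : κ → ℝ) {γ : κ → ℕ}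
    (hγ : ∀ i ∈ t, Even (γ i)) : ∏ i ∈ t, x i ^ γ i = ∏ i ∈ t, |x i| ^ γ i :=
  prod_congr rfl fun i hi => ((hγ i hi).pow_abs _).symm

lemma prod_pow_eq_prod_rpow_of_exponent_eq_sum {ι κ : Type*} (s : Finset ι) (t : Finset κ)
    {y : κ → ℝ} (hy : ∀ i ∈ t, 0 ≤ y i) {α : ι → κ → ℕ} {β : κ → ℕ} {lam : ι → ℝ}
    (hlam : ∀ j ∈ s, 0 ≤ lam j) (hβ : ∀ i ∈ t, (β i : ℝ) = ∑ j ∈ s, lam j * α j i) :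
    ∏ i ∈ t, y i ^ β i = ∏ j ∈ s, (∏ i ∈ t, y i ^ α j i) ^ lam j :=
  calc ∏ i ∈ t, y i ^ β i = ∏ i ∈ t, ∏ j ∈ s, y i ^ (lam j * α j i) := by
        refine prod_congr rfl fun i hi => ?_
        rw [← Real.rpow_natCast, hβ i hi, Real.rpow_sum_of_nonneg (hy i hi)]
        exact fun j hj => mul_nonneg (hlam j hj) (Nat.cast_nonneg _)
    _ = ∏ j ∈ s, ∏ i ∈ t, (y i ^ α j i) ^ lam j := by
        rw [prod_comm]
        refine prod_congr rfl fun j _ => prod_congr rfl fun i hi => ?_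
        rw [mul_comm, Real.rpow_mul (hy i hi), Real.rpow_natCast]
    _ = ∏ j ∈ s, (∏ i ∈ t, y i ^ α j i) ^ lam j :=
        prod_congr rfl fun j _ =>
          Real.finsetProd_rpow _ _ (fun i hi => pow_nonneg (hy i hi) _) _

lemma prod_div_rpow_mul_prod_rpow_le_sum_mul {ι : Type*} (s : Finset ι) {lam c P : ι → ℝ}
    (hlam : ∀ j ∈ s, 0 ≤ lam j) (hsum : ∑ j ∈ s, lam j = 1)
    (hc : ∀ j ∈ s, 0 ≤ c j) (hP : ∀ j ∈ s, 0 ≤ P j) :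
    (∏ j ∈ s with lam j ≠ 0, (c j / lam j) ^ lam j) * ∏ j ∈ s, P j ^ lam j
      ≤ ∑ j ∈ s, c j * P j := by
  have hcl : ∀ j ∈ s, 0 ≤ c j / lam j := fun j hj => div_nonneg (hc j hj) (hlam j hj)
  -- The indices with `λⱼ = 0` contribute `(c/0)^0 = 1` to the product and `0` to the AM-GM sum.
  have hfilter : ∏ j ∈ s with lam j ≠ 0, (c j / lam j) ^ lam j = ∏ j ∈ s, (c j / lam j) ^ lam j :=
    prod_filter_of_ne fun j _ hne h0 => hne (by rw [h0, Real.rpow_zero])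
  calc (∏ j ∈ s with lam j ≠ 0, (c j / lam j) ^ lam j) * ∏ j ∈ s, P j ^ lam j
      = ∏ j ∈ s, (c j / lam j * P j) ^ lam j := by
        rw [hfilter, ← prod_mul_distrib]
        exact prod_congr rfl fun j hj => (Real.mul_rpow (hcl j hj) (hP j hj)).symm
    _ ≤ ∑ j ∈ s, lam j * (c j / lam j * P j) :=
        Real.geom_mean_le_arith_mean_weighted s lam _ hlam hsum
          fun j hj => mul_nonneg (hcl j hj) (hP j hj)
    _ ≤ ∑ j ∈ s, c j * P j := sum_le_sum fun j hj => by
        rcases (hlam j hj).eq_or_lt with h | h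
        · rw [← h, zero_mul]
          exact mul_nonneg (hc j hj) (hP j hj)
        · rw [← mul_assoc, mul_div_cancel₀ _ h.ne']

theorem circuit_nonneg_of_nonneg {ι κ : Type*} [Fintype ι] [Fintype κ] {α : ι → κ → ℕ}
    {β : κ → ℕ} {lam coef : ι → ℝ} {fβ : ℝ} (hlam : ∀ j, 0 ≤ lam j) (hsum : ∑ j, lam j = 1)
    (hβ : ∀ i, (β i : ℝ) = ∑ j, lam j * α j i) (hcoef : ∀ j, 0 ≤ coef j)
    (hfβ : -(∏ j ∈ univ with lam j ≠ 0, (coef j / lam j) ^ lam j) ≤ fβ)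
    {y : κ → ℝ} (hy : ∀ i, 0 ≤ y i) :
    0 ≤ (∑ j, coef j * ∏ i, y i ^ α j i) + fβ * ∏ i, y i ^ β i := by
  have hmono : 0 ≤ ∏ i, y i ^ β i := prod_nonneg fun i _ => pow_nonneg (hy i) _
  have hamgm := prod_div_rpow_mul_prod_rpow_le_sum_mul univ (P := fun j => ∏ i, y i ^ α j i)
    (fun j _ => hlam j) hsum (fun j _ => hcoef j)
    fun j _ => prod_nonneg fun i _ => pow_nonneg (hy i) (α j i)
  rw [← prod_pow_eq_prod_rpow_of_exponent_eq_sum univ univ (fun i _ => hy i)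
    (fun j _ => hlam j) fun i _ => hβ i] at hamgm
  nlinarith [mul_le_mul_of_nonneg_right hfβ hmono]

theorem stmt_6 (n r : ℕ) (α : Fin (r + 1) → Fin n → ℕ) (β : Fin n → ℕ)
    (lam : Fin (r + 1) → ℝ) (coef : Fin (r + 1) → ℝ) (fβ : ℝ)
    (hα : ∀ j i, Even (α j i)) (hβeven : ∀ i, Even (β i))
    (hlam : ∀ j, 0 ≤ lam j) (hsum : ∑ j, lam j = 1)
    (hβ : ∀ i, (β i : ℝ) = ∑ j, lam j * (α j i : ℝ))
    (hcoef : ∀ j, 0 < coef j)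
    (hfβ : -(∏ j ∈ Finset.univ.filter (fun j => lam j ≠ 0),
        (coef j / lam j) ^ (lam j)) ≤ fβ) :
    ∀ x : Fin n → ℝ,
      0 ≤ (∑ j, coef j * ∏ i, x i ^ (α j i)) + fβ * ∏ i, x i ^ (β i) := by
  intro x
  rw [prod_pow_eq_prod_abs_pow_of_even univ x fun i _ => hβeven i,
    sum_congr rfl fun j _ => by rw [prod_pow_eq_prod_abs_pow_of_even univ x fun i _ => hα j i]]
  exact circuit_nonneg_of_nonneg hlam hsum hβ (fun j => (hcoef j).le) hfβ fun i => abs_nonneg _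
end

section
/- Let a, b > 0, let 0 < k < d be integers, set λ = 1 − k/d ∈ (0,1), and let m ∈ ℝ with |m| ≤ (a/λ)^{λ}·(b/(1−λ))^{1−λ}, i.e., |m| ≤ (a/(1−k/d))^{1−k/d}·(b/(k/d))^{k/d}. Then the univariate even circuit satisfies a + b x^{2d} + m x^{2k} ≥ 0 for all x ∈ ℝ. -/
theorem stmt_14 (a b m : ℝ) (ha : 0 < a) (hb : 0 < b) (k d : ℕ)
    (hk : 0 < k) (hkd : k < d)
    (hm : |m| ≤ (a / (1 - (k : ℝ) / d)) ^ (1 - (k : ℝ) / d) *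
        (b / ((k : ℝ) / d)) ^ ((k : ℝ) / d)) :
    ∀ x : ℝ, 0 ≤ a + b * x ^ (2 * d) + m * x ^ (2 * k) := by
  intro x
  have hd0 : 0 < (d : ℝ) := by exact_mod_cast hk.trans hkd
  set l : ℝ := (k : ℝ) / d with hldef
  have hl : 0 < l := div_pos (by exact_mod_cast hk) hd0
  have hl1 : l < 1 := by
    rw [hldef, div_lt_one hd0]; exact_mod_cast hkd
  have h0 : 0 < 1 - l := by linarith
  set t : ℝ := x ^ 2 with htdef
  have ht0 : 0 ≤ t := sq_nonneg x
  have htd : x ^ (2 * d) = t ^ d := by rw [pow_mul]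
  have htk : x ^ (2 * k) = t ^ k := by rw [pow_mul]
  have hpow : ((t : ℝ) ^ d) ^ l = t ^ k := by
    rw [← Real.rpow_natCast t d, ← Real.rpow_natCast t k,
      ← Real.rpow_mul ht0]
    congr 1
    rw [hldef]
    field_simp [hldef]
  have key : (a / (1 - l)) ^ (1 - l) * (b / l) ^ l * t ^ k ≤ a + b * t ^ d := by
    have h := Real.geom_mean_le_arith_mean2_weighted h0.le hl.le
      (by positivity : (0:ℝ) ≤ a / (1 - l))
      (by positivity : (0:ℝ) ≤ b * t ^ d / l) (by ring)
    have hrhs : (1 - l) * (a / (1 - l)) + l * (b * t ^ d / l) = a + b * t ^ d := by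
      field_simp
    have hlhs : (a / (1 - l)) ^ (1 - l) * (b * t ^ d / l) ^ l
        = (a / (1 - l)) ^ (1 - l) * (b / l) ^ l * t ^ k := by
      rw [show b * t ^ d / l = (b / l) * t ^ d by ring,
        Real.mul_rpow (by positivity) (by positivity), hpow]
      ring
    rw [hrhs, hlhs] at h
    exact h
  have htk0 : (0:ℝ) ≤ t ^ k := by positivity
  have hm' : -((a / (1 - l)) ^ (1 - l) * (b / l) ^ l) ≤ m := by
    have := neg_abs_le m
    linarith
  have : -(m * t ^ k) ≤ (a / (1 - l)) ^ (1 - l) * (b / l) ^ l * t ^ k := by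
    rw [← neg_mul]
    exact mul_le_mul_of_nonneg_right (by linarith) htk0
  rw [htd, htk]
  linarith
end

section
/- Let K = {(x,y) : x⁶y² ≤ 1/3} and f(x,y) = 1 + 2x²y⁴ + (1/2)x³y². If μ ∈ (0,3) and 1/2 ≤ ((1−μ/3)/(3/10))^{3/10}·(2/(3/10))^{3/10}·(μ/(2/5))^{2/5}, then (1−μ/3) + 2x²y⁴ + μx⁶y² + (1/2)x³y² ≥ 0 for all (x,y) ∈ ℝ², and hence f ≥ 0 on K. -/
lemma key_pow (a b : ℝ) (ha : 0 ≤ a) (hb : 0 ≤ b) :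
    (a^2*b^4) ^ ((3:ℝ)/10) * (a^6*b^2) ^ ((2:ℝ)/5) = a^3 * b^2 := by
  have ha2 : (0:ℝ) ≤ a^2 := by positivity
  have hb4 : (0:ℝ) ≤ b^4 := by positivity
  have ha6 : (0:ℝ) ≤ a^6 := by positivity
  have hb2 : (0:ℝ) ≤ b^2 := by positivity
  rw [Real.mul_rpow ha2 hb4, Real.mul_rpow ha6 hb2]
  rw [← Real.rpow_natCast a 2, ← Real.rpow_natCast b 4,
      ← Real.rpow_natCast a 6, ← Real.rpow_natCast b 2,
      ← Real.rpow_mul ha, ← Real.rpow_mul hb, ← Real.rpow_mul ha, ← Real.rpow_mul hb]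
  push_cast
  rw [show (2:ℝ)*(3/10) = 3/5 by norm_num, show (4:ℝ)*(3/10) = 6/5 by norm_num,
      show (6:ℝ)*(2/5) = 12/5 by norm_num, show (2:ℝ)*(2/5) = 4/5 by norm_num]
  rw [show a^((3:ℝ)/5) * b^((6:ℝ)/5) * (a^((12:ℝ)/5) * b^((4:ℝ)/5))
        = (a^((3:ℝ)/5) * a^((12:ℝ)/5)) * (b^((6:ℝ)/5) * b^((4:ℝ)/5)) by ring]
  rw [← Real.rpow_add' ha (by norm_num), ← Real.rpow_add' hb (by norm_num)]
  rw [show (3:ℝ)/5 + 12/5 = ((3:ℕ):ℝ) by norm_num,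
      show (6:ℝ)/5 + 4/5 = ((2:ℕ):ℝ) by norm_num,
      Real.rpow_natCast, Real.rpow_natCast]
  norm_num

theorem stmt_15 (μ : ℝ) (hμ0 : 0 < μ) (hμ3 : μ < 3)
    (hcert : (1 : ℝ) / 2 ≤ ((1 - μ / 3) / (3 / 10)) ^ ((3 : ℝ) / 10) *
        (2 / (3 / 10)) ^ ((3 : ℝ) / 10) * (μ / (2 / 5)) ^ ((2 : ℝ) / 5)) :
    (∀ x y : ℝ,
      0 ≤ (1 - μ / 3) + 2 * x^2 * y^4 + μ * x^6 * y^2 + (1 / 2) * x^3 * y^2) ∧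
    (∀ x y : ℝ, x^6 * y^2 ≤ 1 / 3 →
      0 ≤ 1 + 2 * x^2 * y^4 + (1 / 2) * x^3 * y^2) := by
  have hμ3' : 0 ≤ 1 - μ / 3 := by linarith
  have main : ∀ x y : ℝ,
      0 ≤ (1 - μ / 3) + 2 * x^2 * y^4 + μ * x^6 * y^2 + (1 / 2) * x^3 * y^2 := by
    intro x y
    set a := |x| with ha
    set b := |y| with hb
    have ha0 : 0 ≤ a := abs_nonneg x
    have hb0 : 0 ≤ b := abs_nonneg y
    have hx2 : x^2 = a^2 := (sq_abs x).symm
    have hx4 : y^4 = b^4 := by rw [hb, pow_abs, abs_of_nonneg (by positivity)]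
    have hx6 : x^6 = a^6 := by rw [ha, pow_abs, abs_of_nonneg (by positivity)]
    have hy2 : y^2 = b^2 := (sq_abs y).symm
    -- the odd-term bound
    have habs : |x^3 * y^2| = a^3 * b^2 := by
      rw [abs_mul, ha, hb, pow_abs, pow_abs]
    have hodd : -(a^3 * b^2) ≤ x^3 * y^2 := by
      rw [← habs]; exact neg_abs_le _
    -- weighted AM-GM
    set p₁ : ℝ := (1 - μ / 3) / (3 / 10) with hp1
    set p₂ : ℝ := (2 / (3 / 10)) * (a^2 * b^4) with hp2
    set p₃ : ℝ := (μ / (2 / 5)) * (a^6 * b^2) with hp3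
    have hp1' : 0 ≤ p₁ := by positivity
    have hp2' : 0 ≤ p₂ := by positivity
    have hp3' : 0 ≤ p₃ := by positivity
    have hag := Real.geom_mean_le_arith_mean3_weighted
      (by norm_num : (0:ℝ) ≤ 3/10) (by norm_num : (0:ℝ) ≤ 3/10)
      (by norm_num : (0:ℝ) ≤ 2/5) hp1' hp2' hp3' (by norm_num)
    have hlhs : p₁ ^ ((3:ℝ)/10) * p₂ ^ ((3:ℝ)/10) * p₃ ^ ((2:ℝ)/5)
        = (((1 - μ / 3) / (3 / 10)) ^ ((3 : ℝ) / 10) *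
            (2 / (3 / 10)) ^ ((3 : ℝ) / 10) * (μ / (2 / 5)) ^ ((2 : ℝ) / 5))
          * (a^3 * b^2) := by
      rw [hp2, hp3,
          Real.mul_rpow (show (0:ℝ) ≤ 2/(3/10) by norm_num)
            (show (0:ℝ) ≤ a^2*b^4 by positivity),
          Real.mul_rpow (show (0:ℝ) ≤ μ/(2/5) by positivity)
            (show (0:ℝ) ≤ a^6*b^2 by positivity),
          ← key_pow a b ha0 hb0]
      ring
    have hab0 : 0 ≤ a^3 * b^2 := by positivity
    have hgeom : (1/2 : ℝ) * (a^3 * b^2)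
        ≤ (3/10) * p₁ + (3/10) * p₂ + (2/5) * p₃ := by
      refine le_trans ?_ hag
      rw [hlhs]
      exact mul_le_mul_of_nonneg_right hcert hab0
    have hsum : (3/10) * p₁ + (3/10) * p₂ + (2/5) * p₃
        = (1 - μ / 3) + 2 * a^2 * b^4 + μ * a^6 * b^2 := by
      rw [hp1, hp2, hp3]; field_simp
    rw [hsum] at hgeom
    have h1 : -(1/2 : ℝ) * (a^3 * b^2) ≤ (1/2) * (x^3 * y^2) := by linarith
    have e1 : 2 * x^2 * y^4 = 2 * a^2 * b^4 := by rw [hx2, hx4]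
    have e2 : μ * x^6 * y^2 = μ * a^6 * b^2 := by rw [hx6, hy2]
    linarith [hgeom, h1, e1, e2]
  refine ⟨main, fun x y hK => ?_⟩
  have h : μ * x^6 * y^2 ≤ μ * (1/3) := by
    rw [mul_assoc]; exact mul_le_mul_of_nonneg_left hK hμ0.le
  linarith [main x y, h]
end
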